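/- arXiv:0707.4281 — 4 statements merged into one kernel-verified Lean document; each statement's English description precedes it below -/
import Mathlib

section
/- For every integer k ≥ 2 and all integers n ≥ 0 and 0 ≤ ℓ ≤ n with n − ℓ even, the number of k-noncrossing RNA structures on {1,…,n} with exactly ℓ isolated vertices satisfies S_k(n,ℓ) = ∑_{b=0}^{(n−ℓ)/2} (−1)^b · binom(n−b, b) · f_k(n−2b, ℓ). -/
/-- The arcs form a partial matching: each arc `(i,j)` satisfies `i < j`
and every vertex lies in at most one arc. -/
def IsMatchingArcs (n : ℕ) (A : Finset (Fin n × Fin n)) : Prop :=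
  (∀ p ∈ A, p.1 < p.2) ∧
    ∀ p ∈ A, ∀ q ∈ A, p ≠ q →
      p.1 ≠ q.1 ∧ p.1 ≠ q.2 ∧ p.2 ≠ q.1 ∧ p.2 ≠ q.2

/-- `A` contains `k` mutually crossing arcs
`(i₁,j₁),…,(i_k,j_k)` with `i₁ < ⋯ < i_k < j₁ < ⋯ < j_k`. -/
def HasKCrossing (k n : ℕ) (A : Finset (Fin n × Fin n)) : Prop :=
  ∃ f : Fin k → Fin n × Fin n,
    (∀ i, f i ∈ A) ∧
      StrictMono (fun i => (f i).1) ∧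
        StrictMono (fun i => (f i).2) ∧
          ∀ i j, (f i).1 < (f j).2

/-- A `k`-noncrossing digraph on `{1,…,n}`. -/
def IsKNCDigraph (k n : ℕ) (A : Finset (Fin n × Fin n)) : Prop :=
  IsMatchingArcs n A ∧ ¬ HasKCrossing k n A

/-- The set of isolated (degree `0`) vertices. -/
def IsolatedSet (n : ℕ) (A : Finset (Fin n × Fin n)) : Finset (Fin n) :=
  Finset.univ.filter fun v => ∀ p ∈ A, p.1 ≠ v ∧ p.2 ≠ v

/-- `A` contains a `1`-arc, i.e. an arc of the form `(i, i+1)`. -/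
def HasOneArc (n : ℕ) (A : Finset (Fin n × Fin n)) : Prop :=
  ∃ p ∈ A, (p.2 : ℕ) = (p.1 : ℕ) + 1

/-- A `k`-noncrossing RNA structure on `{1,…,n}`: a `k`-noncrossing digraph
without `1`-arcs. -/
def IsRNAStructure (k n : ℕ) (A : Finset (Fin n × Fin n)) : Prop :=
  IsKNCDigraph k n A ∧ ¬ HasOneArc n A

/-- `fNC k n l` = number of `k`-noncrossing digraphs on `{1,…,n}` with
exactly `l` isolated vertices. -/
noncomputable def fNC (k n l : ℕ) : ℕ :=
  Nat.card {A : Finset (Fin n × Fin n) // IsKNCDigraph k n A ∧ (IsolatedSet n A).card = l}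

/-- `SIso k n l` = number of `k`-noncrossing RNA structures on `{1,…,n}` with
exactly `l` isolated vertices. -/
noncomputable def SIso (k n l : ℕ) : ℕ :=
  Nat.card {A : Finset (Fin n × Fin n) // IsRNAStructure k n A ∧ (IsolatedSet n A).card = l}

/-- `SArc k n h` = number of `k`-noncrossing RNA structures on `{1,…,n}` with
exactly `h` arcs. -/
noncomputable def SArc (k n h : ℕ) : ℕ :=
  Nat.card {A : Finset (Fin n × Fin n) // IsRNAStructure k n A ∧ A.card = h}

/-- `STot k n` = total number of `k`-noncrossing RNA structures on `{1,…,n}`. -/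
noncomputable def STot (k n : ℕ) : ℕ :=
  Nat.card {A : Finset (Fin n × Fin n) // IsRNAStructure k n A}

open Finset

namespace RNAaux

variable {n m : ℕ}

lemma natCard_subtype {α : Type*} [Fintype α] (P : α → Prop) [DecidablePred P] :
    Nat.card {x // P x} = (univ.filter P).card := by
  rw [Nat.card_eq_fintype_card, Fintype.card_subtype]

def touched (A : Finset (Fin n × Fin n)) : Finset (Fin n) :=
  A.image Prod.fst ∪ A.image Prod.snd

lemma mem_touched {A : Finset (Fin n × Fin n)} {v : Fin n} :
    v ∈ touched A ↔ ∃ p ∈ A, p.1 = v ∨ p.2 = v := by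
  simp only [touched, mem_union, mem_image]
  constructor
  · rintro (⟨p, hp, rfl⟩ | ⟨p, hp, rfl⟩)
    exacts [⟨p, hp, Or.inl rfl⟩, ⟨p, hp, Or.inr rfl⟩]
  · rintro ⟨p, hp, rfl | rfl⟩
    exacts [Or.inl ⟨p, hp, rfl⟩, Or.inr ⟨p, hp, rfl⟩]

lemma isolated_eq_compl (A : Finset (Fin n × Fin n)) :
    IsolatedSet n A = (touched A)ᶜ := by
  ext v
  simp only [IsolatedSet, mem_filter, mem_univ, true_and, mem_compl, mem_touched]
  push_neg
  constructor
  · intro h p hp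
    exact ⟨(h p hp).1, (h p hp).2⟩
  · intro h p hp
    exact ⟨(h p hp).1, (h p hp).2⟩

lemma card_touched {A : Finset (Fin n × Fin n)} (hA : IsMatchingArcs n A) :
    (touched A).card = 2 * A.card := by
  classical
  have hfst : Set.InjOn Prod.fst (A : Set (Fin n × Fin n)) := by
    intro p hp q hq h
    by_contra hne
    exact (hA.2 p hp q hq hne).1 h
  have hsnd : Set.InjOn Prod.snd (A : Set (Fin n × Fin n)) := by
    intro p hp q hq h
    by_contra hne
    exact (hA.2 p hp q hq hne).2.2.2 h
  have hdisj : Disjoint (A.image Prod.fst) (A.image Prod.snd) := by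
    rw [disjoint_left]
    rintro x hx1 hx2
    obtain ⟨p, hp, rfl⟩ := mem_image.1 hx1
    obtain ⟨q, hq, hqx⟩ := mem_image.1 hx2
    by_cases h : p = q
    · subst h
      exact (hA.1 p hp).ne' hqx
    · exact (hA.2 p hp q hq h).2.1 hqx.symm
  rw [touched, card_union_of_disjoint hdisj, card_image_of_injOn hfst,
    card_image_of_injOn hsnd]
  ring

lemma two_mul_card_add_iso {A : Finset (Fin n × Fin n)} (hA : IsMatchingArcs n A) :
    2 * A.card + (IsolatedSet n A).card = n := by
  have h1 := card_touched hA
  have h2 : (touched A).card ≤ n := by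
    simpa using card_le_univ (touched A)
  rw [isolated_eq_compl, card_compl, Fintype.card_fin]
  omega

lemma one_arc_not_in_crossing {k : ℕ} (hk : 2 ≤ k)
    {f : Fin k → Fin n × Fin n}
    (h1 : StrictMono fun i => (f i).1) (h2 : StrictMono fun i => (f i).2)
    (h3 : ∀ i j, (f i).1 < (f j).2) (m : Fin k) :
    ((f m).2 : ℕ) ≠ ((f m).1 : ℕ) + 1 := by
  intro heq
  rcases Nat.eq_zero_or_pos (m : ℕ) with h0 | h0
  · have hk1 : 1 < k := by omega
    have hlt : m < (⟨1, hk1⟩ : Fin k) := by simp [Fin.lt_def]; omega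
    have a : (f m).1 < (f ⟨1, hk1⟩).1 := h1 hlt
    have b : (f ⟨1, hk1⟩).1 < (f m).2 := h3 ⟨1, hk1⟩ m
    rw [Fin.lt_def] at a b
    omega
  · have hk0 : 0 < k := by omega
    have hlt : (⟨0, hk0⟩ : Fin k) < m := by simp [Fin.lt_def]; omega
    have a : (f ⟨0, hk0⟩).2 < (f m).2 := h2 hlt
    have b : (f m).1 < (f ⟨0, hk0⟩).2 := h3 m ⟨0, hk0⟩
    rw [Fin.lt_def] at a b
    omega

def pushA (g : Fin m → Fin n) (A' : Finset (Fin m × Fin m)) : Finset (Fin n × Fin n) :=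
  A'.image fun q => (g q.1, g q.2)

def pullA (g : Fin m → Fin n) (A : Finset (Fin n × Fin n)) : Finset (Fin m × Fin m) :=
  univ.filter fun q => (g q.1, g q.2) ∈ A

lemma mem_pullA {g : Fin m → Fin n} {A : Finset (Fin n × Fin n)} {q : Fin m × Fin m} :
    q ∈ pullA g A ↔ (g q.1, g q.2) ∈ A := by
  simp [pullA]

lemma mem_pushA {g : Fin m → Fin n} {A' : Finset (Fin m × Fin m)} {p : Fin n × Fin n} :
    p ∈ pushA g A' ↔ ∃ q ∈ A', (g q.1, g q.2) = p := by
  simp [pushA]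

lemma matching_pullA {g : Fin m → Fin n} (hg : StrictMono g) {A : Finset (Fin n × Fin n)}
    (hA : IsMatchingArcs n A) : IsMatchingArcs m (pullA g A) := by
  constructor
  · intro q hq
    exact hg.lt_iff_lt.1 (hA.1 _ (mem_pullA.1 hq))
  · intro p hp q hq hne
    have hp' := mem_pullA.1 hp
    have hq' := mem_pullA.1 hq
    have hne' : (g p.1, g p.2) ≠ (g q.1, g q.2) := by
      intro h
      exact hne (Prod.ext (hg.injective (congrArg Prod.fst h))
        (hg.injective (congrArg Prod.snd h)))
    have H := hA.2 _ hp' _ hq' hne'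
    exact ⟨fun h => H.1 (congrArg g h), fun h => H.2.1 (congrArg g h),
      fun h => H.2.2.1 (congrArg g h), fun h => H.2.2.2 (congrArg g h)⟩

lemma crossing_pullA {k : ℕ} {g : Fin m → Fin n} (hg : StrictMono g)
    {A : Finset (Fin n × Fin n)}
    (h : HasKCrossing k m (pullA g A)) : HasKCrossing k n A := by
  obtain ⟨f, hf, h1, h2, h3⟩ := h
  exact ⟨fun i => (g (f i).1, g (f i).2), fun i => mem_pullA.1 (hf i),
    fun i j hij => hg (h1 hij), fun i j hij => hg (h2 hij), fun i j => hg (h3 i j)⟩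

lemma crossing_pushA_rev {k : ℕ} {g : Fin m → Fin n} (hg : StrictMono g)
    {A' : Finset (Fin m × Fin m)}
    (h : HasKCrossing k n (pushA g A')) : HasKCrossing k m A' := by
  obtain ⟨f, hf, h1, h2, h3⟩ := h
  have hex : ∀ i, ∃ q, q ∈ A' ∧ (g q.1, g q.2) = f i := by
    intro i
    obtain ⟨q, hq, hq2⟩ := mem_pushA.1 (hf i)
    exact ⟨q, hq, hq2⟩
  choose q hq hq2 using hex
  have e1 : ∀ i, g (q i).1 = (f i).1 := fun i => congrArg Prod.fst (hq2 i)
  have e2 : ∀ i, g (q i).2 = (f i).2 := fun i => congrArg Prod.snd (hq2 i)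
  refine ⟨q, hq, ?_, ?_, ?_⟩
  · intro i j hij
    have a : (f i).1 < (f j).1 := h1 hij
    rw [← e1 i, ← e1 j] at a
    exact hg.lt_iff_lt.1 a
  · intro i j hij
    have a : (f i).2 < (f j).2 := h2 hij
    rw [← e2 i, ← e2 j] at a
    exact hg.lt_iff_lt.1 a
  · intro i j
    have a := h3 i j
    rw [← e1 i, ← e2 j] at a
    exact hg.lt_iff_lt.1 a

lemma crossing_union {k : ℕ} (hk : 2 ≤ k) {M B : Finset (Fin n × Fin n)}
    (hM1 : ∀ p ∈ M, (p.2 : ℕ) = (p.1 : ℕ) + 1)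
    (h : HasKCrossing k n (M ∪ B)) : HasKCrossing k n B := by
  obtain ⟨f, hf, h1, h2, h3⟩ := h
  refine ⟨f, fun i => ?_, h1, h2, h3⟩
  rcases mem_union.1 (hf i) with hi | hi
  · exact absurd (hM1 _ hi) (one_arc_not_in_crossing hk h1 h2 h3 i)
  · exact hi

lemma matching_pushA {g : Fin m → Fin n} (hg : StrictMono g) {A' : Finset (Fin m × Fin m)}
    (hA' : IsMatchingArcs m A') : IsMatchingArcs n (pushA g A') := by
  constructor
  · intro p hp
    obtain ⟨q, hq, rfl⟩ := mem_pushA.1 hp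
    exact hg (hA'.1 q hq)
  · intro p hp q hq hne
    obtain ⟨a, ha, rfl⟩ := mem_pushA.1 hp
    obtain ⟨c, hc, rfl⟩ := mem_pushA.1 hq
    have hac : a ≠ c := fun h => hne (by rw [h])
    have H := hA'.2 a ha c hc hac
    exact ⟨fun e => H.1 (hg.injective e), fun e => H.2.1 (hg.injective e),
      fun e => H.2.2.1 (hg.injective e), fun e => H.2.2.2 (hg.injective e)⟩

lemma matching_union_M {M : Finset (Fin n × Fin n)} {g : Fin m → Fin n}
    (hM : IsMatchingArcs n M) (hg : StrictMono g)
    (hrange : ∀ x : Fin n, (∃ i, g i = x) ↔ x ∉ touched M)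
    {A' : Finset (Fin m × Fin m)} (hA' : IsMatchingArcs m A') :
    IsMatchingArcs n (M ∪ pushA g A') := by
  have hP := matching_pushA hg hA'
  have hdisj : ∀ p ∈ M, ∀ q ∈ pushA g A',
      p.1 ≠ q.1 ∧ p.1 ≠ q.2 ∧ p.2 ≠ q.1 ∧ p.2 ≠ q.2 := by
    intro p hp q hq
    obtain ⟨a, ha, rfl⟩ := mem_pushA.1 hq
    have h1 : g a.1 ∉ touched M := (hrange _).1 ⟨_, rfl⟩
    have h2 : g a.2 ∉ touched M := (hrange _).1 ⟨_, rfl⟩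
    have hp1 : p.1 ∈ touched M := mem_touched.2 ⟨p, hp, Or.inl rfl⟩
    have hp2 : p.2 ∈ touched M := mem_touched.2 ⟨p, hp, Or.inr rfl⟩
    refine ⟨fun e => h1 ?_, fun e => h2 ?_, fun e => h1 ?_, fun e => h2 ?_⟩
    · rw [show g a.1 = p.1 from e.symm]; exact hp1
    · rw [show g a.2 = p.1 from e.symm]; exact hp1
    · rw [show g a.1 = p.2 from e.symm]; exact hp2
    · rw [show g a.2 = p.2 from e.symm]; exact hp2
  constructor
  · intro p hp
    rcases mem_union.1 hp with h | h
    exacts [hM.1 p h, hP.1 p h]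
  · intro p hp q hq hne
    rcases mem_union.1 hp with h1 | h1 <;> rcases mem_union.1 hq with h2 | h2
    · exact hM.2 p h1 q h2 hne
    · exact hdisj p h1 q h2
    · have H := hdisj q h2 p h1
      exact ⟨H.1.symm, H.2.2.1.symm, H.2.1.symm, H.2.2.2.symm⟩
    · exact hP.2 p h1 q h2 hne

lemma decomp {M : Finset (Fin n × Fin n)} {g : Fin m → Fin n}
    (hg : Function.Injective g)
    (hrange : ∀ x : Fin n, (∃ i, g i = x) ↔ x ∉ touched M)
    {A : Finset (Fin n × Fin n)}
    (hA : IsMatchingArcs n A) (hMA : M ⊆ A) :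
    A = M ∪ pushA g (pullA g A) := by
  apply Finset.Subset.antisymm
  · intro p hp
    by_cases hpM : p ∈ M
    · exact mem_union_left _ hpM
    · have hne : ∀ q ∈ M, p ≠ q := fun q hq h => hpM (h ▸ hq)
      have h1 : p.1 ∉ touched M := by
        rw [mem_touched]
        rintro ⟨q, hq, hq1 | hq2⟩
        · exact (hA.2 p hp q (hMA hq) (hne q hq)).1 hq1.symm
        · exact (hA.2 p hp q (hMA hq) (hne q hq)).2.1 hq2.symm
      have h2 : p.2 ∉ touched M := by
        rw [mem_touched]
        rintro ⟨q, hq, hq1 | hq2⟩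
        · exact (hA.2 p hp q (hMA hq) (hne q hq)).2.2.1 hq1.symm
        · exact (hA.2 p hp q (hMA hq) (hne q hq)).2.2.2 hq2.symm
      obtain ⟨a, ha⟩ := (hrange p.1).2 h1
      obtain ⟨c, hc⟩ := (hrange p.2).2 h2
      apply mem_union_right
      rw [mem_pushA]
      refine ⟨(a, c), mem_pullA.2 ?_, ?_⟩
      · show (g a, g c) ∈ A
        rw [ha, hc]
        simpa using hp
      · show (g a, g c) = p
        rw [ha, hc]
  · intro p hp
    rcases mem_union.1 hp with h | h
    · exact hMA h
    · obtain ⟨q, hq, rfl⟩ := mem_pushA.1 h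
      exact mem_pullA.1 hq

lemma pull_union {M : Finset (Fin n × Fin n)} {g : Fin m → Fin n}
    (hg : Function.Injective g)
    (hrange : ∀ x : Fin n, (∃ i, g i = x) ↔ x ∉ touched M)
    (A' : Finset (Fin m × Fin m)) :
    pullA g (M ∪ pushA g A') = A' := by
  ext q
  rw [mem_pullA, mem_union]
  constructor
  · rintro (h | h)
    · exact absurd (mem_touched.2 ⟨_, h, Or.inl rfl⟩) ((hrange (g q.1)).1 ⟨q.1, rfl⟩)
    · obtain ⟨r, hr, hr2⟩ := mem_pushA.1 h
      have e : r = q := Prod.ext (hg (congrArg Prod.fst hr2)) (hg (congrArg Prod.snd hr2))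
      rwa [← e]
  · intro h
    exact Or.inr (mem_pushA.2 ⟨q, h, rfl⟩)

lemma iso_union {M : Finset (Fin n × Fin n)} {g : Fin m → Fin n}
    (hg : StrictMono g)
    (hrange : ∀ x : Fin n, (∃ i, g i = x) ↔ x ∉ touched M)
    (A' : Finset (Fin m × Fin m)) :
    IsolatedSet n (M ∪ pushA g A') = (IsolatedSet m A').image g := by
  ext x
  simp only [IsolatedSet, mem_filter, mem_univ, true_and, mem_image]
  by_cases hx : x ∈ touched M
  · constructor
    · intro h
      obtain ⟨p, hp, hcase⟩ := mem_touched.1 hx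
      have H := h p (mem_union_left _ hp)
      rcases hcase with h1 | h2
      · exact absurd h1 H.1
      · exact absurd h2 H.2
    · rintro ⟨v, hv, rfl⟩
      exact absurd hx ((hrange _).1 ⟨v, rfl⟩)
  · obtain ⟨v, rfl⟩ := (hrange x).2 hx
    constructor
    · intro h
      refine ⟨v, fun q hq => ?_, rfl⟩
      have H := h (g q.1, g q.2) (mem_union_right _ (mem_pushA.2 ⟨q, hq, rfl⟩))
      exact ⟨fun e => H.1 (congrArg g e), fun e => H.2 (congrArg g e)⟩
    · rintro ⟨w, hw, hwv⟩
      have hwv' : w = v := hg.injective hwv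
      subst hwv'
      intro p hp
      rcases mem_union.1 hp with hpM | hpP
      · constructor
        · intro e
          exact ((hrange (g w)).1 ⟨w, rfl⟩) (mem_touched.2 ⟨p, hpM, Or.inl e⟩)
        · intro e
          exact ((hrange (g w)).1 ⟨w, rfl⟩) (mem_touched.2 ⟨p, hpM, Or.inr e⟩)
      · obtain ⟨q, hq, rfl⟩ := mem_pushA.1 hpP
        have H := hw q hq
        exact ⟨fun e => H.1 (hg.injective e), fun e => H.2 (hg.injective e)⟩

lemma count_superset (k l : ℕ) (hk : 2 ≤ k) {n : ℕ} (M : Finset (Fin n × Fin n))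
    (hM : IsMatchingArcs n M) (hM1 : ∀ p ∈ M, (p.2 : ℕ) = (p.1 : ℕ) + 1)
    [DecidablePred fun A : Finset (Fin n × Fin n) =>
      (IsKNCDigraph k n A ∧ (IsolatedSet n A).card = l) ∧ M ⊆ A] :
    (univ.filter fun A : Finset (Fin n × Fin n) =>
        (IsKNCDigraph k n A ∧ (IsolatedSet n A).card = l) ∧ M ⊆ A).card
      = fNC k (n - 2 * M.card) l := by
  classical
  have htc : (touched M).card = 2 * M.card := card_touched hM
  have hV : ((touched M)ᶜ : Finset (Fin n)).card = n - 2 * M.card := by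
    rw [card_compl, htc, Fintype.card_fin]
  set g : Fin (n - 2 * M.card) → Fin n := fun i => (touched M)ᶜ.orderEmbOfFin hV i with hgdef
  have hg : StrictMono g := ((touched M)ᶜ.orderEmbOfFin hV).strictMono
  have hrange : ∀ x : Fin n, (∃ i, g i = x) ↔ x ∉ touched M := by
    intro x
    constructor
    · rintro ⟨i, rfl⟩
      exact mem_compl.1 (orderEmbOfFin_mem _ hV i)
    · intro hx
      have hx' : x ∈ ((touched M)ᶜ : Finset (Fin n)) := mem_compl.2 hx
      have : x ∈ Set.range ((touched M)ᶜ.orderEmbOfFin hV) := by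
        rw [range_orderEmbOfFin]
        exact hx'
      exact this
  rw [fNC, natCard_subtype]
  refine Finset.card_bij' (fun A _ => pullA g A) (fun A' _ => M ∪ pushA g A')
    ?_ ?_ ?_ ?_
  · intro A hA
    rw [mem_filter] at hA ⊢
    obtain ⟨-, ⟨⟨hmatch, hcross⟩, hiso⟩, hMA⟩ := hA
    refine ⟨mem_univ _, ⟨matching_pullA hg hmatch,
      fun hc => hcross (crossing_pullA hg hc)⟩, ?_⟩
    have hdec := decomp hg.injective hrange hmatch hMA
    have heq : IsolatedSet n A = (IsolatedSet _ (pullA g A)).image g := by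
      conv_lhs => rw [hdec]
      exact iso_union hg hrange _
    rw [heq, card_image_of_injective _ hg.injective] at hiso
    exact hiso
  · intro A' hA'
    rw [mem_filter] at hA' ⊢
    obtain ⟨-, ⟨hmatch, hcross⟩, hiso⟩ := hA'
    refine ⟨mem_univ _, ⟨⟨matching_union_M hM hg hrange hmatch, fun hc =>
      hcross (crossing_pushA_rev hg (crossing_union hk hM1 hc))⟩, ?_⟩,
      subset_union_left⟩
    rw [iso_union hg hrange, card_image_of_injective _ hg.injective, hiso]
  · intro A hA
    rw [mem_filter] at hA
    exact (decomp hg.injective hrange hA.2.1.1.1 hA.2.2).symm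
  · intro A' _
    exact pull_union hg.injective hrange A'

lemma smono_gap {b : ℕ} {g : Fin b → ℕ} (hg : StrictMono g) :
    ∀ (d : ℕ) (i j : Fin b), (j : ℕ) = (i : ℕ) + d → g i + d ≤ g j := by
  intro d
  induction d with
  | zero =>
    intro i j h
    have hij : i = j := Fin.ext (by omega)
    rw [hij]
    omega
  | succ d ih =>
    intro i j h
    have hd : (i : ℕ) + d < b := by omega
    have h1 := ih i ⟨(i : ℕ) + d, hd⟩ (by simp)
    have h2 : g ⟨(i : ℕ) + d, hd⟩ < g j := hg (by simp [Fin.lt_def]; omega)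
    omega

lemma smono_gap2 {b : ℕ} {g : Fin b → ℕ} (hg : StrictMono g)
    (hsp : ∀ i j : Fin b, i < j → g i + 2 ≤ g j) :
    ∀ (d : ℕ) (i j : Fin b), (j : ℕ) = (i : ℕ) + d → g i + 2 * d ≤ g j := by
  intro d
  induction d with
  | zero =>
    intro i j h
    have hij : i = j := Fin.ext (by omega)
    rw [hij]
    omega
  | succ d ih =>
    intro i j h
    have hd : (i : ℕ) + d < b := by omega
    have h1 := ih i ⟨(i : ℕ) + d, hd⟩ (by simp)
    have h2 : g ⟨(i : ℕ) + d, hd⟩ + 2 ≤ g j := hsp _ _ (by simp [Fin.lt_def]; omega)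
    omega

lemma smono_le {b : ℕ} {g : Fin b → ℕ} (hg : StrictMono g) (i : Fin b) :
    (i : ℕ) ≤ g i := by
  have h0 : (0 : ℕ) < b := i.pos
  have := smono_gap hg (i : ℕ) ⟨0, h0⟩ i (by simp)
  omega

/-- number of sparse `b`-subsets of `range N` -/
lemma card_sparse (N b : ℕ) :
    ((range N).powerset.filter fun T => T.card = b ∧
        ∀ x ∈ T, ∀ y ∈ T, x ≠ y → x + 2 ≤ y ∨ y + 2 ≤ x).card
      = Nat.choose (N + 1 - b) b := by
  classical
  rw [← card_range (N + 1 - b), ← card_powersetCard]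
  refine Finset.card_bij'
    (fun T hT => image (fun i : Fin b =>
      T.orderEmbOfFin (mem_filter.1 hT).2.1 i - (i : ℕ)) univ)
    (fun S hS => image (fun i : Fin b =>
      S.orderEmbOfFin (mem_powersetCard.1 hS).2 i + (i : ℕ)) univ)
    ?_ ?_ ?_ ?_
  · intro T hT
    have hTp := (mem_filter.1 hT).1
    have hTs := (mem_filter.1 hT).2.2
    set f : Fin b ↪o ℕ := T.orderEmbOfFin (mem_filter.1 hT).2.1 with hf
    have hfmono : StrictMono f := f.strictMono
    have hfmem : ∀ i, f i ∈ T := fun i => orderEmbOfFin_mem _ _ _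
    have hfN : ∀ i, f i < N := fun i =>
      mem_range.1 (mem_powerset.1 hTp (hfmem i))
    have hgap : ∀ i j : Fin b, i < j → f i + 2 ≤ f j := by
      intro i j hij
      rcases hTs (f i) (hfmem i) (f j) (hfmem j) (hfmono.injective.ne hij.ne) with h | h
      · exact h
      · exact absurd (hfmono hij) (by omega)
    rw [mem_powersetCard]
    constructor
    · intro x hx
      obtain ⟨i, -, rfl⟩ := mem_image.1 hx
      rw [mem_range]
      show f i - (i : ℕ) < N + 1 - b
      have hlast : (b - 1 : ℕ) < b := by have := i.pos; omega
      have h3 : (i : ℕ) < b := i.2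
      obtain ⟨d, hd⟩ : ∃ d, (i : ℕ) + d = b - 1 := ⟨(b - 1) - (i : ℕ), by omega⟩
      have h1 := smono_gap2 hfmono hgap d i ⟨b - 1, hlast⟩
        (by show b - 1 = (i : ℕ) + d; omega)
      have h2 : f ⟨b - 1, hlast⟩ < N := hfN _
      have h4 := smono_le hfmono i
      omega
    · rw [card_image_of_injOn, card_univ, Fintype.card_fin]
      intro i _ j _ hij
      have hij' : f i - (i : ℕ) = f j - (j : ℕ) := hij
      by_contra hne
      have hle := smono_le hfmono
      rcases Ne.lt_or_gt hne with h | h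
      · rw [Fin.lt_def] at h
        obtain ⟨d, hd⟩ : ∃ d, (i : ℕ) + d = (j : ℕ) ∧ 0 < d := ⟨(j : ℕ) - (i : ℕ), by omega, by omega⟩
        have := smono_gap2 hfmono hgap d i j (by omega)
        have hi := hle i
        omega
      · rw [Fin.lt_def] at h
        obtain ⟨d, hd⟩ : ∃ d, (j : ℕ) + d = (i : ℕ) ∧ 0 < d := ⟨(i : ℕ) - (j : ℕ), by omega, by omega⟩
        have := smono_gap2 hfmono hgap d j i (by omega)
        have hj := hle j
        omega
  · intro S hS
    have hSp := (mem_powersetCard.1 hS).1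
    set g : Fin b ↪o ℕ := S.orderEmbOfFin (mem_powersetCard.1 hS).2 with hgf
    have hgmono : StrictMono g := g.strictMono
    have hgmem : ∀ i, g i ∈ S := fun i => orderEmbOfFin_mem _ _ _
    have hgN : ∀ i, g i < N + 1 - b := fun i => mem_range.1 (hSp (hgmem i))
    rw [mem_filter, mem_powerset]
    refine ⟨?_, ?_, ?_⟩
    · intro x hx
      obtain ⟨i, -, rfl⟩ := mem_image.1 hx
      rw [mem_range]
      show g i + (i : ℕ) < N
      have h1 := hgN i
      have h2 : (i : ℕ) < b := i.2
      omega
    · rw [card_image_of_injOn, card_univ, Fintype.card_fin]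
      intro i _ j _ hij
      have hij' : g i + (i : ℕ) = g j + (j : ℕ) := hij
      by_contra hne
      rcases Ne.lt_or_gt hne with h | h
      · have h2 := hgmono h
        rw [Fin.lt_def] at h
        omega
      · have h2 := hgmono h
        rw [Fin.lt_def] at h
        omega
    · intro x hx y hy hxy
      obtain ⟨i, -, rfl⟩ := mem_image.1 hx
      obtain ⟨j, -, rfl⟩ := mem_image.1 hy
      have hxy' : g i + (i : ℕ) ≠ g j + (j : ℕ) := hxy
      show g i + (i : ℕ) + 2 ≤ g j + (j : ℕ) ∨ g j + (j : ℕ) + 2 ≤ g i + (i : ℕ)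
      have hij : i ≠ j := fun h => hxy (by rw [h])
      rcases Ne.lt_or_gt hij with h | h
      · rw [Fin.lt_def] at h
        obtain ⟨d, hd⟩ : ∃ d, (i : ℕ) + d = (j : ℕ) ∧ 0 < d := ⟨(j : ℕ) - (i : ℕ), by omega, by omega⟩
        have h1 := smono_gap hgmono d i j (by omega)
        omega
      · rw [Fin.lt_def] at h
        obtain ⟨d, hd⟩ : ∃ d, (j : ℕ) + d = (i : ℕ) ∧ 0 < d := ⟨(i : ℕ) - (j : ℕ), by omega, by omega⟩
        have h1 := smono_gap hgmono d j i (by omega)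
        omega
  · -- left inverse
    intro T hT
    have hTp := (mem_filter.1 hT).1
    have hTs := (mem_filter.1 hT).2.2
    set f : Fin b ↪o ℕ := T.orderEmbOfFin (mem_filter.1 hT).2.1 with hf
    have hfmono : StrictMono f := f.strictMono
    have hfmem : ∀ i, f i ∈ T := fun i => orderEmbOfFin_mem _ _ _
    have hgap : ∀ i j : Fin b, i < j → f i + 2 ≤ f j := by
      intro i j hij
      rcases hTs (f i) (hfmem i) (f j) (hfmem j) (hfmono.injective.ne hij.ne) with h | h
      · exact h
      · exact absurd (hfmono hij) (by omega)
    have hle := smono_le hfmono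
    have hmono' : StrictMono fun i : Fin b => f i - (i : ℕ) := by
      intro i j hij
      rw [Fin.lt_def] at hij
      obtain ⟨d, hd⟩ : ∃ d, (i : ℕ) + d = (j : ℕ) ∧ 0 < d := ⟨(j : ℕ) - (i : ℕ), by omega, by omega⟩
      have := smono_gap2 hfmono hgap d i j (by omega)
      have hi := hle i
      show f i - (i : ℕ) < f j - (j : ℕ)
      omega
    have hcard : (image (fun i : Fin b => f i - (i : ℕ)) univ).card = b := by
      rw [card_image_of_injOn (hmono'.injective.injOn), card_univ, Fintype.card_fin]
    have hemb := orderEmbOfFin_unique hcard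
      (f := fun i : Fin b => f i - (i : ℕ))
      (fun i => mem_image_of_mem _ (mem_univ i)) hmono'
    ext x
    simp only [mem_image, mem_univ, true_and]
    constructor
    · rintro ⟨i, hi⟩
      have he := congrFun hemb.symm i
      rw [he] at hi
      have hi' : f i - (i : ℕ) + (i : ℕ) = x := hi
      have h2 := hle i
      have hfx : f i = x := by omega
      rw [← hfx]
      exact hfmem i
    · intro hx
      have hxr : x ∈ Set.range f := by
        have := range_orderEmbOfFin T (mem_filter.1 hT).2.1
        rw [hf, this]
        exact hx
      obtain ⟨i, rfl⟩ := hxr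
      refine ⟨i, ?_⟩
      have he := congrFun hemb.symm i
      rw [he]
      show f i - (i : ℕ) + (i : ℕ) = f i
      have h2 := hle i
      omega
  · -- right inverse
    intro S hS
    have hSp := (mem_powersetCard.1 hS).1
    set g : Fin b ↪o ℕ := S.orderEmbOfFin (mem_powersetCard.1 hS).2 with hgf
    have hgmono : StrictMono g := g.strictMono
    have hmono' : StrictMono fun i : Fin b => g i + (i : ℕ) := by
      intro i j hij
      have h1 := hgmono hij
      rw [Fin.lt_def] at hij
      show g i + (i : ℕ) < g j + (j : ℕ)
      omega
    have hcard : (image (fun i : Fin b => g i + (i : ℕ)) univ).card = b := by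
      rw [card_image_of_injOn (hmono'.injective.injOn), card_univ, Fintype.card_fin]
    have hemb := orderEmbOfFin_unique hcard
      (f := fun i : Fin b => g i + (i : ℕ))
      (fun i => mem_image_of_mem _ (mem_univ i)) hmono'
    ext x
    simp only [mem_image, mem_univ, true_and]
    constructor
    · rintro ⟨i, hi⟩
      have he := congrFun hemb.symm i
      rw [he] at hi
      have hi' : g i + (i : ℕ) - (i : ℕ) = x := hi
      have hgx : g i = x := by omega
      rw [← hgx]
      exact orderEmbOfFin_mem _ _ _
    · intro hx
      have hxr : x ∈ Set.range g := by
        have := range_orderEmbOfFin S (mem_powersetCard.1 hS).2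
        rw [hgf, this]
        exact hx
      obtain ⟨i, rfl⟩ := hxr
      refine ⟨i, ?_⟩
      have he := congrFun hemb.symm i
      rw [he]
      show g i + (i : ℕ) - (i : ℕ) = g i
      omega

lemma card_one_matchings (n b : ℕ)
    [DecidablePred fun M : Finset (Fin n × Fin n) =>
      (IsMatchingArcs n M ∧ ∀ p ∈ M, (p.2 : ℕ) = (p.1 : ℕ) + 1) ∧ M.card = b] :
    (univ.filter fun M : Finset (Fin n × Fin n) =>
        (IsMatchingArcs n M ∧ ∀ p ∈ M, (p.2 : ℕ) = (p.1 : ℕ) + 1) ∧ M.card = b).card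
      = Nat.choose (n - b) b := by
  classical
  have key : (univ.filter fun M : Finset (Fin n × Fin n) =>
        (IsMatchingArcs n M ∧ ∀ p ∈ M, (p.2 : ℕ) = (p.1 : ℕ) + 1) ∧ M.card = b).card
      = ((range (n - 1)).powerset.filter fun T => T.card = b ∧
          ∀ x ∈ T, ∀ y ∈ T, x ≠ y → x + 2 ≤ y ∨ y + 2 ≤ x).card := by
    refine Finset.card_bij'
      (fun M _ => M.image (fun p => (p.1.1 : ℕ)))
      (fun T hT => T.attach.image (fun x =>
        ((⟨x.1, by
            have := mem_range.1 (mem_powerset.1 (mem_filter.1 hT).1 x.2); omega⟩ : Fin n),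
         (⟨x.1 + 1, by
            have := mem_range.1 (mem_powerset.1 (mem_filter.1 hT).1 x.2); omega⟩ : Fin n))))
      ?_ ?_ ?_ ?_
    · intro M hM
      have hMm := (mem_filter.1 hM).2.1.1
      have hM1 := (mem_filter.1 hM).2.1.2
      have hMc := (mem_filter.1 hM).2.2
      have hinj : Set.InjOn (fun p : Fin n × Fin n => (p.1.1 : ℕ)) (M : Set (Fin n × Fin n)) := by
        intro p hp q hq h
        by_contra hne
        exact (hMm.2 p hp q hq hne).1 (Fin.ext h)
      rw [mem_filter, mem_powerset]
      refine ⟨?_, ?_, ?_⟩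
      · intro x hx
        obtain ⟨p, hp, rfl⟩ := mem_image.1 hx
        have h1 := hM1 p hp
        have h2 : (p.2.1 : ℕ) < n := p.2.2
        rw [mem_range]
        omega
      · rw [card_image_of_injOn hinj, hMc]
      · intro x hx y hy hxy
        obtain ⟨p, hp, rfl⟩ := mem_image.1 hx
        obtain ⟨q, hq, rfl⟩ := mem_image.1 hy
        have hpq : p ≠ q := fun h => hxy (by rw [h])
        have H := hMm.2 p hp q hq hpq
        have e1 : (p.1.1 : ℕ) ≠ q.1.1 := fun h => H.1 (Fin.ext h)
        have e2 : (p.1.1 : ℕ) ≠ q.2.1 := fun h => H.2.1 (Fin.ext h)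
        have e3 : (p.2.1 : ℕ) ≠ q.1.1 := fun h => H.2.2.1 (Fin.ext h)
        have e4 : (p.2.1 : ℕ) ≠ q.2.1 := fun h => H.2.2.2 (Fin.ext h)
        have h1 := hM1 p hp
        have h2 := hM1 q hq
        omega
    · intro T hT
      have hTr := mem_powerset.1 (mem_filter.1 hT).1
      have hTc := (mem_filter.1 hT).2.1
      have hTs := (mem_filter.1 hT).2.2
      have hbound : ∀ x ∈ T, x < n - 1 := fun x hx => mem_range.1 (hTr hx)
      rw [mem_filter]
      have hvalne : ∀ (a c : ℕ) (ha : a < n) (hc : c < n), a ≠ c →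
          (⟨a, ha⟩ : Fin n) ≠ ⟨c, hc⟩ := by
        intro a c ha hc h he
        exact h (by injection he)
      refine ⟨mem_univ _, ⟨⟨?_, ?_⟩, ?_⟩, ?_⟩
      · -- order
        intro p hp
        obtain ⟨x, -, rfl⟩ := mem_image.1 hp
        exact Fin.mk_lt_mk.mpr (by omega)
      · -- disjointness
        intro p hp q hq hne
        obtain ⟨x, -, rfl⟩ := mem_image.1 hp
        obtain ⟨y, -, rfl⟩ := mem_image.1 hq
        have hxy : (x : ℕ) ≠ (y : ℕ) := by
          intro h
          apply hne
          have hxy' : x = y := Subtype.ext h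
          rw [hxy']
        have hgap := hTs x.1 x.2 y.1 y.2 hxy
        exact ⟨hvalne _ _ _ _ (by omega), hvalne _ _ _ _ (by omega),
          hvalne _ _ _ _ (by omega), hvalne _ _ _ _ (by omega)⟩
      · -- one-arcs
        intro p hp
        obtain ⟨x, -, rfl⟩ := mem_image.1 hp
        rfl
      · -- card
        rw [card_image_of_injOn, card_attach, hTc]
        intro x _ y _ h
        have : (x : ℕ) = (y : ℕ) := by
          have := congrArg (fun p : Fin n × Fin n => (p.1.1 : ℕ)) h
          simpa using this
        exact Subtype.ext this
    · -- left inverse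
      intro M hM
      have hM1 := (mem_filter.1 hM).2.1.2
      ext p
      constructor
      · intro hp
        obtain ⟨x, hxa, rfl⟩ := mem_image.1 hp
        obtain ⟨q, hq, hqx⟩ := mem_image.1 x.2
        have h1 := hM1 q hq
        have hx1 : (x.1 : ℕ) < n := by rw [← hqx]; exact q.1.2
        have hx2 : (x.1 : ℕ) + 1 < n := by have := q.2.2; omega
        have e : ((⟨x.1, hx1⟩ : Fin n), (⟨x.1 + 1, hx2⟩ : Fin n)) = q := by
          apply Prod.ext
          · exact Fin.ext hqx.symm
          · exact Fin.ext (by show (x.1 : ℕ) + 1 = (q.2.1 : ℕ); omega)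
        have hm : ((⟨x.1, hx1⟩ : Fin n), (⟨x.1 + 1, hx2⟩ : Fin n)) ∈ M := by
          rw [e]; exact hq
        exact hm
      · intro hp
        apply mem_image.2
        refine ⟨⟨(p.1.1 : ℕ), mem_image_of_mem _ hp⟩, mem_attach _ _, ?_⟩
        have h1 := hM1 p hp
        apply Prod.ext
        · exact Fin.ext rfl
        · exact Fin.ext h1.symm
    · -- right inverse
      intro T hT
      ext y
      constructor
      · intro hy
        obtain ⟨p, hp, rfl⟩ := mem_image.1 hy
        obtain ⟨x, hx, rfl⟩ := mem_image.1 hp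
        exact x.2
      · intro hy
        apply mem_image.2
        exact ⟨_, mem_image_of_mem _ (mem_attach T ⟨y, hy⟩), rfl⟩
  rw [key, card_sparse]
  rcases Nat.eq_zero_or_pos n with rfl | hn
  · rcases Nat.eq_zero_or_pos b with rfl | hb
    · simp
    · have e1 : 0 - 1 + 1 - b = 0 - b := by omega
      rw [e1]
  · congr 1
    omega

lemma matching_subset {n : ℕ} {M A : Finset (Fin n × Fin n)} (h : M ⊆ A)
    (hA : IsMatchingArcs n A) : IsMatchingArcs n M :=
  ⟨fun p hp => hA.1 p (h hp), fun p hp q hq hne => hA.2 p (h hp) q (h hq) hne⟩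

end RNAaux


open RNAaux Finset in
/-- For every integer `k ≥ 2` and all `0 ≤ ℓ ≤ n` with `n − ℓ` even,
`S_k(n,ℓ) = ∑_{b=0}^{(n−ℓ)/2} (−1)^b C(n−b,b) f_k(n−2b,ℓ)`. -/
theorem stmt0 (k n l : ℕ) (hk : 2 ≤ k) (hl : l ≤ n) (hpar : 2 ∣ (n - l)) :
    (SIso k n l : ℤ) =
      ∑ b ∈ Finset.range ((n - l) / 2 + 1),
        (-1 : ℤ) ^ b * (Nat.choose (n - b) b : ℤ) * (fNC k (n - 2 * b) l : ℤ) := by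
  classical
  set m := (n - l) / 2 with hm
  set oneArcs : Finset (Fin n × Fin n) → Finset (Fin n × Fin n) :=
    fun A => A.filter (fun p => (p.2 : ℕ) = (p.1 : ℕ) + 1) with hoa
  set D := univ.filter fun A : Finset (Fin n × Fin n) =>
    IsKNCDigraph k n A ∧ (IsolatedSet n A).card = l with hD
  have hAcard : ∀ A ∈ D, A.card = m := by
    intro A hA
    rw [hD, mem_filter] at hA
    have h2 := two_mul_card_add_iso hA.2.1.1
    rw [hA.2.2] at h2
    omega
  have hOA : ∀ A : Finset (Fin n × Fin n), ¬ HasOneArc n A ↔ oneArcs A = ∅ := by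
    intro A
    rw [hoa, filter_eq_empty_iff]
    unfold HasOneArc
    push_neg
    rfl
  have hS : (SIso k n l : ℕ) = (D.filter fun A => ¬ HasOneArc n A).card := by
    rw [SIso, natCard_subtype, hD, filter_filter]
    congr 1
    apply filter_congr
    intro A _
    unfold IsRNAStructure
    tauto
  set 𝓜 := univ.filter fun M : Finset (Fin n × Fin n) =>
    (IsMatchingArcs n M ∧ ∀ p ∈ M, (p.2 : ℕ) = (p.1 : ℕ) + 1) ∧ M.card ≤ m with hMM
  calc (SIso k n l : ℤ)
      = ((D.filter fun A => ¬ HasOneArc n A).card : ℤ) := by rw [hS]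
    _ = ∑ A ∈ D, if oneArcs A = ∅ then (1 : ℤ) else 0 := by
        rw [card_filter]
        push_cast
        refine Finset.sum_congr rfl fun A _ => ?_
        simp only [hOA A]
    _ = ∑ A ∈ D, ∑ M ∈ (oneArcs A).powerset, (-1 : ℤ) ^ M.card := by
        refine Finset.sum_congr rfl fun A _ => ?_
        rw [Finset.sum_powerset_neg_one_pow_card]
    _ = ∑ A ∈ D, ∑ M ∈ (univ : Finset (Finset (Fin n × Fin n))),
          if M ⊆ oneArcs A then (-1 : ℤ) ^ M.card else 0 := by
        refine Finset.sum_congr rfl fun A _ => ?_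
        have hps : (oneArcs A).powerset
            = univ.filter fun M => M ⊆ oneArcs A := by
          ext M
          simp [mem_powerset]
        rw [hps, sum_filter]
    _ = ∑ M ∈ (univ : Finset (Finset (Fin n × Fin n))), ∑ A ∈ D,
          if M ⊆ oneArcs A then (-1 : ℤ) ^ M.card else 0 := Finset.sum_comm
    _ = ∑ M ∈ (univ : Finset (Finset (Fin n × Fin n))),
          (-1 : ℤ) ^ M.card * ((D.filter fun A => M ⊆ oneArcs A).card : ℤ) := by
        refine Finset.sum_congr rfl fun M _ => ?_
        rw [← sum_filter, sum_const, nsmul_eq_mul, mul_comm]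
    _ = ∑ M ∈ 𝓜,
          (-1 : ℤ) ^ M.card * ((D.filter fun A => M ⊆ oneArcs A).card : ℤ) := by
        symm
        apply Finset.sum_subset (subset_univ 𝓜)
        intro M _ hM
        have hempty : D.filter (fun A => M ⊆ oneArcs A) = ∅ := by
          rw [filter_eq_empty_iff]
          intro A hA hsub
          apply hM
          rw [hMM, mem_filter]
          have hMA : M ⊆ A := hsub.trans (filter_subset _ _)
          have hADm : IsMatchingArcs n A := by
            rw [hD, mem_filter] at hA
            exact hA.2.1.1
          refine ⟨mem_univ _, ⟨matching_subset hMA hADm, fun p hp => ?_⟩, ?_⟩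
          · exact (mem_filter.1 (hsub hp)).2
          · rw [← hAcard A hA]
            exact card_le_card hMA
        rw [hempty]
        simp
    _ = ∑ b ∈ Finset.range (m + 1), ∑ M ∈ 𝓜.filter (fun M => M.card = b),
          (-1 : ℤ) ^ M.card * ((D.filter fun A => M ⊆ oneArcs A).card : ℤ) := by
        symm
        apply Finset.sum_fiberwise_of_maps_to
        intro M hM
        rw [hMM, mem_filter] at hM
        rw [mem_range]
        omega
    _ = ∑ b ∈ Finset.range (m + 1),
          (-1 : ℤ) ^ b * (Nat.choose (n - b) b : ℤ) * (fNC k (n - 2 * b) l : ℤ) := by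
        refine Finset.sum_congr rfl fun b hb => ?_
        rw [mem_range] at hb
        have hterm : ∀ M ∈ 𝓜.filter (fun M => M.card = b),
            (-1 : ℤ) ^ M.card * ((D.filter fun A => M ⊆ oneArcs A).card : ℤ)
              = (-1 : ℤ) ^ b * (fNC k (n - 2 * b) l : ℤ) := by
          intro M hM
          rw [mem_filter, hMM, mem_filter] at hM
          obtain ⟨⟨-, ⟨hMm, hM1⟩, -⟩, hMc⟩ := hM
          have hfilt : D.filter (fun A => M ⊆ oneArcs A)
              = univ.filter (fun A : Finset (Fin n × Fin n) =>
                  (IsKNCDigraph k n A ∧ (IsolatedSet n A).card = l) ∧ M ⊆ A) := by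
            rw [hD, filter_filter]
            apply filter_congr
            intro A _
            constructor
            · rintro ⟨h1, h2⟩
              exact ⟨h1, h2.trans (filter_subset _ _)⟩
            · rintro ⟨h1, h2⟩
              exact ⟨h1, fun p hp => mem_filter.2 ⟨h2 hp, hM1 p hp⟩⟩
          rw [hfilt, count_superset k l hk M hMm hM1, hMc]
        rw [Finset.sum_congr rfl hterm, sum_const]
        have hcnt : (𝓜.filter (fun M => M.card = b)).card = Nat.choose (n - b) b := by
          rw [← card_one_matchings n b]
          congr 1
          rw [hMM, filter_filter]
          apply filter_congr
          intro M _
          constructor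
          · rintro ⟨⟨h1, -⟩, h2⟩
            exact ⟨h1, h2⟩
          · rintro ⟨h1, h2⟩
            exact ⟨⟨h1, by omega⟩, h2⟩
        rw [hcnt, nsmul_eq_mul]
        push_cast
        ring
end

section
/- For every integer k ≥ 2 and every integer n ≥ 0, the total number of k-noncrossing RNA structures on {1,…,n} satisfies S_k(n) = ∑_{b=0}^{⌊n/2⌋} (−1)^b · binom(n−b, b) · ( ∑_{ℓ=0}^{n−2b} f_k(n−2b, ℓ) ). -/
/-!
Inclusion–exclusion over the `1`-arcs: `S_k(n) = ∑_B (-1)^|B| · #{k-noncrossing digraphs ⊇ B}`,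
where `B` runs over the matchings of `1`-arcs. For `k ≥ 2` a `1`-arc lies in no `k`-crossing, so
the digraphs containing `B` correspond, after relabelling the vertices that `B` leaves isolated in
increasing order, to all `k`-noncrossing digraphs on `n - 2|B|` vertices. The left ends of a
matching of `b` one-arcs are `b` pairwise non-adjacent cells, counted by Pascal's recursion as
`C(n - b, b)`, and `∑_ℓ f_k(m, ℓ)` counts all `k`-noncrossing digraphs on `m` vertices.
-/

open Finset

section

open scoped Classical

/-- Left cells of `b` non-overlapping dominoes on a strip of `n` cells. -/
def dominoSets (n b : ℕ) : Finset (Finset ℕ) :=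
  (powersetCard b (range n)).filter fun S => ∀ i ∈ S, i + 1 < n ∧ i + 1 ∉ S

lemma mem_dominoSets {n b : ℕ} {S : Finset ℕ} :
    S ∈ dominoSets n b ↔ #S = b ∧ ∀ i ∈ S, i + 1 < n ∧ i + 1 ∉ S := by
  simp only [dominoSets, mem_filter, mem_powersetCard]
  constructor
  · rintro ⟨⟨-, hb⟩, h⟩
    exact ⟨hb, h⟩
  · rintro ⟨hb, h⟩
    exact ⟨⟨fun i hi => mem_range.2 (by have := (h i hi).1; omega), hb⟩, h⟩

lemma dominoSets_zero_right (n : ℕ) : dominoSets n 0 = {∅} := by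
  ext S
  simp +contextual [mem_dominoSets]

lemma dominoSets_succ_of_le_one {n : ℕ} (hn : n ≤ 1) (b : ℕ) : dominoSets n (b + 1) = ∅ := by
  ext S
  simp only [mem_dominoSets, notMem_empty, iff_false, not_and]
  intro hS h
  obtain ⟨i, hi⟩ := card_pos.1 (hS ▸ b.succ_pos : 0 < #S)
  have := (h i hi).1
  omega

lemma filter_notMem_dominoSets (n b : ℕ) :
    (dominoSets (n + 2) b).filter (n ∉ ·) = dominoSets (n + 1) b := by
  ext S
  simp only [mem_filter, mem_dominoSets]
  constructor
  · rintro ⟨⟨hb, h⟩, hn⟩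
    refine ⟨hb, fun i hi => ⟨?_, (h i hi).2⟩⟩
    have := (h i hi).1
    have : i ≠ n := by rintro rfl; exact hn hi
    omega
  · rintro ⟨hb, h⟩
    refine ⟨⟨hb, fun i hi => ⟨by have := (h i hi).1; omega, (h i hi).2⟩⟩, fun hn => ?_⟩
    have := (h n hn).1
    omega

lemma card_filter_mem_dominoSets (n b : ℕ) :
    #((dominoSets (n + 2) (b + 1)).filter (n ∈ ·)) = #(dominoSets n b) := by
  refine card_nbij' (fun S => S.erase n) (fun S => insert n S) ?_ ?_ ?_ ?_
  · intro S hS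
    rw [mem_coe, mem_filter, mem_dominoSets] at hS
    rw [mem_coe, mem_dominoSets]
    obtain ⟨⟨hb, h⟩, hn⟩ := hS
    refine ⟨by rw [card_erase_of_mem hn, hb]; rfl, fun i hi => ?_⟩
    obtain ⟨hin, hiS⟩ := mem_erase.1 hi
    have := h i hiS
    have : i + 1 ≠ n := fun e => this.2 (e ▸ hn)
    exact ⟨by omega, fun h' => (h i hiS).2 (mem_of_mem_erase h')⟩
  · intro S hS
    rw [mem_coe, mem_dominoSets] at hS
    rw [mem_coe, mem_filter, mem_dominoSets]
    obtain ⟨hb, h⟩ := hS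
    have hn : n ∉ S := fun hn => by have := (h n hn).1; omega
    refine ⟨⟨by rw [card_insert_of_notMem hn, hb], fun i hi => ?_⟩, mem_insert_self n S⟩
    rcases mem_insert.1 hi with rfl | hi
    · refine ⟨by omega, fun h' => ?_⟩
      rcases mem_insert.1 h' with h' | h'
      · omega
      · have := (h _ h').1; omega
    · have := (h i hi).1
      refine ⟨by omega, fun h' => ?_⟩
      rcases mem_insert.1 h' with h' | h'
      · omega
      · exact (h i hi).2 h'
  · intro S hS
    exact insert_erase (mem_filter.1 hS).2
  · intro S hS
    have := (mem_dominoSets.1 hS).2 n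
    exact erase_insert fun hn => by have := (this hn).1; omega

lemma card_dominoSets_add_two (n b : ℕ) :
    #(dominoSets (n + 2) (b + 1)) = #(dominoSets (n + 1) (b + 1)) + #(dominoSets n b) := by
  rw [← card_filter_add_card_filter_not (p := (n ∈ ·)), card_filter_mem_dominoSets,
    filter_notMem_dominoSets, add_comm]

theorem card_dominoSets : ∀ n b : ℕ, #(dominoSets n b) = (n - b).choose b
  | n, 0 => by simp [dominoSets_zero_right]
  | 0, b + 1 => by simp [dominoSets_succ_of_le_one]
  | 1, b + 1 => by simp [dominoSets_succ_of_le_one]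
  | n + 2, b + 1 => by
    rw [card_dominoSets_add_two, card_dominoSets (n + 1), card_dominoSets n]
    rcases le_or_gt b n with hb | hb
    · rw [show n + 2 - (b + 1) = n - b + 1 by omega, show n + 1 - (b + 1) = n - b by omega,
        Nat.choose_succ_succ', add_comm]
    · rw [Nat.choose_eq_zero_of_lt (by omega : n + 2 - (b + 1) < b + 1),
        Nat.choose_eq_zero_of_lt (by omega : n + 1 - (b + 1) < b + 1),
        Nat.choose_eq_zero_of_lt (by omega : n - b < b)]

variable {k n : ℕ}

noncomputable def oneArcMatchings (n : ℕ) : Finset (Finset (Fin n × Fin n)) :=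
  univ.filter fun B => IsMatchingArcs n B ∧ ∀ p ∈ B, (p.2 : ℕ) = p.1 + 1

lemma mem_oneArcMatchings {B : Finset (Fin n × Fin n)} :
    B ∈ oneArcMatchings n ↔ IsMatchingArcs n B ∧ ∀ p ∈ B, (p.2 : ℕ) = p.1 + 1 := by
  simp [oneArcMatchings]

lemma oneArc_ext {p q : Fin n × Fin n} (hp : (p.2 : ℕ) = p.1 + 1) (hq : (q.2 : ℕ) = q.1 + 1)
    (h : (p.1 : ℕ) = q.1) : p = q :=
  Prod.ext (Fin.ext h) (Fin.ext (by omega))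

noncomputable def oneArcsFrom (n : ℕ) (S : Finset ℕ) : Finset (Fin n × Fin n) :=
  univ.filter fun p => (p.1 : ℕ) ∈ S ∧ (p.2 : ℕ) = p.1 + 1

lemma mem_oneArcsFrom {S : Finset ℕ} {p : Fin n × Fin n} :
    p ∈ oneArcsFrom n S ↔ (p.1 : ℕ) ∈ S ∧ (p.2 : ℕ) = p.1 + 1 := by
  simp [oneArcsFrom]

lemma image_oneArcsFrom {S : Finset ℕ} (hS : ∀ i ∈ S, i + 1 < n) :
    (oneArcsFrom n S).image (fun p => (p.1 : ℕ)) = S := by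
  ext i
  simp only [mem_oneArcsFrom, mem_image]
  refine ⟨fun ⟨p, ⟨hp, _⟩, hpi⟩ => hpi ▸ hp, fun hi => ?_⟩
  have := hS i hi
  exact ⟨(⟨i, by omega⟩, ⟨i + 1, this⟩), ⟨hi, rfl⟩, rfl⟩

lemma oneArcsFrom_image {B : Finset (Fin n × Fin n)} (hB : ∀ p ∈ B, (p.2 : ℕ) = p.1 + 1) :
    oneArcsFrom n (B.image fun p => (p.1 : ℕ)) = B := by
  ext p
  simp only [mem_oneArcsFrom, mem_image]
  constructor
  · rintro ⟨⟨q, hq, hqp⟩, hp⟩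
    rwa [← oneArc_ext (hB q hq) hp hqp]
  · exact fun hp => ⟨⟨p, hp, rfl⟩, hB p hp⟩

lemma oneArcsFrom_mem_oneArcMatchings {S : Finset ℕ} (hS : ∀ i ∈ S, i + 1 ∉ S) :
    oneArcsFrom n S ∈ oneArcMatchings n := by
  simp only [mem_oneArcMatchings, IsMatchingArcs, mem_oneArcsFrom]
  refine ⟨⟨fun p hp => Fin.lt_def.2 (by omega), fun p ⟨hpS, hp⟩ q ⟨hqS, hq⟩ hpq => ?_⟩,
    fun p hp => hp.2⟩
  have h1 : (p.1 : ℕ) ≠ q.1 := fun h => hpq (oneArc_ext hp hq h)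
  refine ⟨fun h => h1 (congrArg Fin.val h), fun h => ?_, fun h => ?_,
    fun h => h1 (by have := congrArg Fin.val h; omega)⟩
  · exact hS q.1 hqS (by rw [← hq, ← h]; exact hpS)
  · exact hS p.1 hpS (by rw [← hp, h]; exact hqS)

lemma card_oneArcMatchings_filter_card (n b : ℕ) :
    #{B ∈ oneArcMatchings n | #B = b} = (n - b).choose b := by
  rw [← card_dominoSets]
  refine card_nbij (fun B => B.image fun p => (p.1 : ℕ)) ?_ ?_ ?_
  · intro B hB
    rw [mem_coe, mem_filter, mem_oneArcMatchings] at hB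
    obtain ⟨⟨hM, h1⟩, hb⟩ := hB
    rw [mem_coe, mem_dominoSets, card_image_of_injOn
      fun p hp q hq h => oneArc_ext (h1 p hp) (h1 q hq) h]
    refine ⟨hb, ?_⟩
    simp only [mem_image, forall_exists_index, and_imp, forall_apply_eq_imp_iff₂]
    intro p hp
    refine ⟨by have := h1 p hp; omega, ?_⟩
    rintro ⟨q, hq, hqp⟩
    have hpq : p ≠ q := by rintro rfl; omega
    exact (hM.2 p hp q hq hpq).2.2.1 (Fin.ext (by rw [h1 p hp, hqp]))
  · intro B hB B' hB' h
    rw [← oneArcsFrom_image (mem_oneArcMatchings.1 (mem_filter.1 hB).1).2,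
      ← oneArcsFrom_image (mem_oneArcMatchings.1 (mem_filter.1 hB').1).2]
    exact congrArg (oneArcsFrom n) h
  · intro S hS
    rw [mem_coe, mem_dominoSets] at hS
    have himage := image_oneArcsFrom (n := n) fun i hi => (hS.2 i hi).1
    refine ⟨oneArcsFrom n S, ?_, himage⟩
    rw [mem_coe, mem_filter]
    refine ⟨oneArcsFrom_mem_oneArcMatchings fun i hi => (hS.2 i hi).2, ?_⟩
    rw [← hS.1, ← card_image_of_injOn (f := fun p : Fin n × Fin n => (p.1 : ℕ)), himage]
    intro p hp q hq h
    exact oneArc_ext (mem_oneArcsFrom.1 hp).2 (mem_oneArcsFrom.1 hq).2 h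

lemma HasKCrossing.mono {A B : Finset (Fin n × Fin n)} (hAB : A ⊆ B) (h : HasKCrossing k n A) :
    HasKCrossing k n B :=
  let ⟨f, hf, h1, h2, h3⟩ := h
  ⟨f, fun i => hAB (hf i), h1, h2, h3⟩

/-- Some other arc of the crossing has an endpoint strictly inside the arc `f i`. -/
lemma val_add_two_le_of_crossing (hk : 2 ≤ k) {f : Fin k → Fin n × Fin n}
    (h1 : StrictMono fun i => (f i).1) (h2 : StrictMono fun i => (f i).2)
    (h3 : ∀ i j, (f i).1 < (f j).2) (i : Fin k) : (f i).1.val + 2 ≤ (f i).2 := by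
  obtain ⟨j, hji⟩ : ∃ j, j ≠ i := by
    by_cases hi : i.val = 0
    · exact ⟨⟨1, by omega⟩, fun h => by simp [Fin.ext_iff, hi] at h⟩
    · exact ⟨⟨0, by omega⟩, fun h => hi (by rw [← h])⟩
  rcases hji.lt_or_gt with hlt | hlt
  · have : (f j).2 < (f i).2 := h2 hlt
    have : (f i).1 < (f j).2 := h3 i j
    omega
  · have : (f i).1 < (f j).1 := h1 hlt
    have : (f j).1 < (f i).2 := h3 j i
    omega

lemma hasKCrossing_union_oneArcs_iff (hk : 2 ≤ k) {B C : Finset (Fin n × Fin n)}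
    (hB : ∀ p ∈ B, (p.2 : ℕ) = p.1 + 1) : HasKCrossing k n (B ∪ C) ↔ HasKCrossing k n C := by
  refine ⟨fun ⟨f, hf, h1, h2, h3⟩ => ⟨f, fun i => ?_, h1, h2, h3⟩,
    HasKCrossing.mono subset_union_right⟩
  refine (mem_union.1 (hf i)).resolve_left fun hfB => ?_
  have := val_add_two_le_of_crossing hk h1 h2 h3 i
  have := hB _ hfB
  omega

section Embedding

variable {m : ℕ} (e : Fin m ↪o Fin n)

def arcEmb : Fin m × Fin m ↪ Fin n × Fin n :=
  e.toEmbedding.prodMap e.toEmbedding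

@[simp] lemma arcEmb_fst (p : Fin m × Fin m) : (arcEmb e p).1 = e p.1 := rfl

@[simp] lemma arcEmb_snd (p : Fin m × Fin m) : (arcEmb e p).2 = e p.2 := rfl

lemma isMatchingArcs_map_iff {A : Finset (Fin m × Fin m)} :
    IsMatchingArcs n (A.map (arcEmb e)) ↔ IsMatchingArcs m A := by
  simp only [IsMatchingArcs, forall_mem_map, (arcEmb e).injective.ne_iff, arcEmb_fst,
    arcEmb_snd, e.lt_iff_lt, e.injective.ne_iff]

lemma hasKCrossing_map_iff {A : Finset (Fin m × Fin m)} :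
    HasKCrossing k n (A.map (arcEmb e)) ↔ HasKCrossing k m A := by
  constructor
  · rintro ⟨f, hf, h1, h2, h3⟩
    choose g hg hgf using fun i => mem_map.1 (hf i)
    refine ⟨g, hg, fun i j hij => ?_, fun i j hij => ?_, fun i j => ?_⟩
    · simpa [← hgf] using h1 hij
    · simpa [← hgf] using h2 hij
    · simpa [← hgf] using h3 i j
  · rintro ⟨f, hf, h1, h2, h3⟩
    exact ⟨fun i => arcEmb e (f i), fun i => mem_map_of_mem _ (hf i),
      fun i j hij => e.strictMono (h1 hij), fun i j hij => e.strictMono (h2 hij),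
      fun i j => e.strictMono (h3 i j)⟩

lemma isKNCDigraph_map_iff {A : Finset (Fin m × Fin m)} :
    IsKNCDigraph k n (A.map (arcEmb e)) ↔ IsKNCDigraph k m A := by
  rw [IsKNCDigraph, IsKNCDigraph, isMatchingArcs_map_iff, hasKCrossing_map_iff]

end Embedding

def arcEnds (A : Finset (Fin n × Fin n)) : Finset (Fin n) :=
  A.biUnion fun p => {p.1, p.2}

lemma mem_isolatedSet {A : Finset (Fin n × Fin n)} {v : Fin n} :
    v ∈ IsolatedSet n A ↔ ∀ p ∈ A, p.1 ≠ v ∧ p.2 ≠ v := by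
  simp [IsolatedSet]

lemma isolatedSet_eq_compl_arcEnds (A : Finset (Fin n × Fin n)) :
    IsolatedSet n A = (arcEnds A)ᶜ := by
  ext v
  simp only [mem_isolatedSet, arcEnds, mem_compl, mem_biUnion, mem_insert, mem_singleton,
    not_exists, not_and, not_or]
  exact forall₂_congr fun p _ => by rw [ne_comm, ne_comm (a := p.2)]

lemma IsMatchingArcs.card_arcEnds {A : Finset (Fin n × Fin n)} (hA : IsMatchingArcs n A) :
    #(arcEnds A) = 2 * #A := by
  rw [arcEnds, card_biUnion, sum_congr rfl fun p hp => card_pair (hA.1 p hp).ne, sum_const,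
    smul_eq_mul, mul_comm]
  intro p hp q hq hpq
  have := hA.2 p hp q hq hpq
  simp only [disjoint_insert_left, disjoint_insert_right, mem_insert, mem_singleton,
    disjoint_singleton]
  tauto

lemma IsMatchingArcs.card_isolatedSet {A : Finset (Fin n × Fin n)} (hA : IsMatchingArcs n A) :
    #(IsolatedSet n A) = n - 2 * #A := by
  rw [isolatedSet_eq_compl_arcEnds, card_compl, hA.card_arcEnds, Fintype.card_fin]

lemma IsMatchingArcs.two_mul_card_le {A : Finset (Fin n × Fin n)} (hA : IsMatchingArcs n A) :
    2 * #A ≤ n :=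
  hA.card_arcEnds ▸ (card_le_univ (arcEnds A)).trans_eq (Fintype.card_fin n)

noncomputable def kncDigraphs (k n : ℕ) : Finset (Finset (Fin n × Fin n)) :=
  univ.filter (IsKNCDigraph k n)

lemma mem_kncDigraphs {A : Finset (Fin n × Fin n)} : A ∈ kncDigraphs k n ↔ IsKNCDigraph k n A := by
  simp [kncDigraphs]

lemma card_kncDigraphs_filter_supported (S : Finset (Fin n)) :
    #{C ∈ kncDigraphs k n | ∀ p ∈ C, p.1 ∈ S ∧ p.2 ∈ S} = #(kncDigraphs k #S) := by
  set e := S.orderEmbOfFin rfl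
  rw [← card_map (mapEmbedding (arcEmb e)).toEmbedding]
  congr 1
  ext C
  have hrange : (∀ p ∈ C, p.1 ∈ S ∧ p.2 ∈ S) ↔ C ⊆ univ.map (arcEmb e) := by
    have he : ∀ v, v ∈ S ↔ ∃ x, e x = v := fun v => by
      rw [← Set.mem_range, S.range_orderEmbOfFin, mem_coe]
    simp [subset_iff, arcEmb, he]
  simp only [mem_filter, mem_map, mem_kncDigraphs, hrange, subset_map_iff, subset_univ,
    true_and, RelEmbedding.coe_toEmbedding, mapEmbedding_apply]
  constructor
  · rintro ⟨hC, A, rfl⟩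
    exact ⟨A, (isKNCDigraph_map_iff e).1 hC, rfl⟩
  · rintro ⟨A, hA, rfl⟩
    exact ⟨(isKNCDigraph_map_iff e).2 hA, A, rfl⟩

lemma IsMatchingArcs.mono {A B : Finset (Fin n × Fin n)} (hA : IsMatchingArcs n A)
    (hBA : B ⊆ A) : IsMatchingArcs n B :=
  ⟨fun p hp => hA.1 p (hBA hp), fun p hp q hq h => hA.2 p (hBA hp) q (hBA hq) h⟩

lemma IsMatchingArcs.union {B C : Finset (Fin n × Fin n)} (hB : IsMatchingArcs n B)
    (hC : IsMatchingArcs n C)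
    (hCB : ∀ p ∈ C, p.1 ∈ IsolatedSet n B ∧ p.2 ∈ IsolatedSet n B) :
    IsMatchingArcs n (B ∪ C) := by
  simp only [mem_isolatedSet] at hCB
  refine ⟨fun p hp => (mem_union.1 hp).elim (hB.1 p) (hC.1 p), fun p hp q hq hpq => ?_⟩
  rcases mem_union.1 hp with hp | hp <;> rcases mem_union.1 hq with hq | hq
  · exact hB.2 p hp q hq hpq
  · have := hCB q hq
    grind
  · have := hCB p hp
    grind
  · exact hC.2 p hp q hq hpq

lemma IsMatchingArcs.sdiff_supported {A B : Finset (Fin n × Fin n)} (hA : IsMatchingArcs n A)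
    (hBA : B ⊆ A) : ∀ p ∈ A \ B, p.1 ∈ IsolatedSet n B ∧ p.2 ∈ IsolatedSet n B := by
  intro p hp
  obtain ⟨hpA, hpB⟩ := mem_sdiff.1 hp
  simp only [mem_isolatedSet]
  have h : ∀ q ∈ B, _ := fun q hq => hA.2 q (hBA hq) p hpA fun h => hpB (h ▸ hq)
  exact ⟨fun q hq => ⟨(h q hq).1, (h q hq).2.2.1⟩, fun q hq => ⟨(h q hq).2.1, (h q hq).2.2.2⟩⟩

lemma card_kncDigraphs_filter_superset (hk : 2 ≤ k) {B : Finset (Fin n × Fin n)}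
    (hB : B ∈ oneArcMatchings n) :
    #{A ∈ kncDigraphs k n | B ⊆ A} = #(kncDigraphs k (n - 2 * #B)) := by
  obtain ⟨hBm, hB1⟩ := mem_oneArcMatchings.1 hB
  rw [← hBm.card_isolatedSet, ← card_kncDigraphs_filter_supported]
  have hdisj : ∀ C : Finset (Fin n × Fin n),
      (∀ p ∈ C, p.1 ∈ IsolatedSet n B ∧ p.2 ∈ IsolatedSet n B) → Disjoint B C := by
    refine fun C hC => disjoint_right.2 fun p hp hpB => ?_
    exact ((mem_isolatedSet.1 (hC p hp).1) p hpB).1 rfl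
  refine card_nbij' (fun A => A \ B) (fun C => B ∪ C) ?_ ?_ ?_ ?_
  · intro A hA
    simp only [mem_coe, mem_filter, mem_kncDigraphs] at hA ⊢
    obtain ⟨⟨hAm, hAc⟩, hBA⟩ := hA
    exact ⟨⟨hAm.mono sdiff_subset, fun h => hAc (h.mono sdiff_subset)⟩, hAm.sdiff_supported hBA⟩
  · intro C hC
    simp only [mem_coe, mem_filter, mem_kncDigraphs] at hC ⊢
    obtain ⟨⟨hCm, hCc⟩, hCB⟩ := hC
    exact ⟨⟨hBm.union hCm hCB, by rwa [hasKCrossing_union_oneArcs_iff hk hB1]⟩,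
      subset_union_left⟩
  · intro A hA
    exact union_sdiff_of_subset (mem_filter.1 hA).2
  · intro C hC
    exact union_sdiff_cancel_left (hdisj C (mem_filter.1 hC).2)

lemma sum_fNC (k m : ℕ) : ∑ l ∈ range (m + 1), fNC k m l = #(kncDigraphs k m) := by
  rw [card_eq_sum_card_fiberwise (f := fun A => #(IsolatedSet m A)) (t := range (m + 1))]
  · refine sum_congr rfl fun l _ => ?_
    rw [fNC, Nat.card_eq_fintype_card, Fintype.card_subtype, kncDigraphs, filter_filter]
  · exact fun A _ =>
      mem_range.2 (Nat.lt_succ_of_le ((card_le_univ _).trans_eq (Fintype.card_fin m)))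

noncomputable def oneArcs (A : Finset (Fin n × Fin n)) : Finset (Fin n × Fin n) :=
  A.filter fun p => (p.2 : ℕ) = p.1 + 1

lemma sTot_eq_card_filter_oneArcs_eq_empty (k n : ℕ) :
    STot k n = #{A ∈ kncDigraphs k n | oneArcs A = ∅} := by
  rw [STot, Nat.card_eq_fintype_card, Fintype.card_subtype, kncDigraphs, filter_filter]
  congr 1
  ext A
  simp [IsRNAStructure, HasOneArc, oneArcs, filter_eq_empty_iff]

lemma subset_oneArcs_iff {A B : Finset (Fin n × Fin n)} :
    B ⊆ oneArcs A ↔ B ⊆ A ∧ ∀ p ∈ B, (p.2 : ℕ) = p.1 + 1 := by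
  simp only [oneArcs, subset_iff, mem_filter]
  exact ⟨fun h => ⟨fun p hp => (h hp).1, fun p hp => (h hp).2⟩, fun h p hp => ⟨h.1 hp, h.2 p hp⟩⟩

/-- Inclusion–exclusion over the sets `B` of `1`-arcs of `A`; such a `B` is a matching. -/
lemma card_filter_oneArcs_eq_empty (k n : ℕ) :
    (#{A ∈ kncDigraphs k n | oneArcs A = ∅} : ℤ) =
      ∑ B ∈ oneArcMatchings n, (-1) ^ #B * (#{A ∈ kncDigraphs k n | B ⊆ A} : ℤ) := by
  calc (#{A ∈ kncDigraphs k n | oneArcs A = ∅} : ℤ)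
      = ∑ A ∈ kncDigraphs k n, ∑ B ∈ (oneArcs A).powerset, (-1 : ℤ) ^ #B := by
        simp only [sum_powerset_neg_one_pow_card, sum_boole]
    _ = ∑ B ∈ oneArcMatchings n, ∑ A ∈ kncDigraphs k n with B ⊆ A, (-1 : ℤ) ^ #B := by
        refine sum_comm' fun A B => ?_
        simp only [mem_powerset, mem_filter, mem_kncDigraphs, mem_oneArcMatchings,
          subset_oneArcs_iff]
        exact ⟨fun ⟨hA, hBA, hB1⟩ => ⟨⟨hA, hBA⟩, hA.1.mono hBA, hB1⟩,
          fun ⟨⟨hA, hBA⟩, _, hB1⟩ => ⟨hA, hBA, hB1⟩⟩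
    _ = _ := by simp only [sum_const, nsmul_eq_mul, mul_comm]

end

/-- `S_k(n) = ∑_{b=0}^{⌊n/2⌋} (−1)^b C(n−b,b) ∑_{ℓ=0}^{n−2b} f_k(n−2b,ℓ)`. -/
theorem stmt1 (k n : ℕ) (hk : 2 ≤ k) :
    (STot k n : ℤ) =
      ∑ b ∈ Finset.range (n / 2 + 1),
        (-1 : ℤ) ^ b * (Nat.choose (n - b) b : ℤ) *
          ∑ l ∈ Finset.range (n - 2 * b + 1), (fNC k (n - 2 * b) l : ℤ) := by
  have hcard : ∀ B ∈ oneArcMatchings n, #B ∈ range (n / 2 + 1) := fun B hB =>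
    mem_range.2 (by have := (mem_oneArcMatchings.1 hB).1.two_mul_card_le; omega)
  calc (STot k n : ℤ)
      = ∑ B ∈ oneArcMatchings n, (-1) ^ #B * (#(kncDigraphs k (n - 2 * #B)) : ℤ) := by
        rw [sTot_eq_card_filter_oneArcs_eq_empty, card_filter_oneArcs_eq_empty]
        exact sum_congr rfl fun B hB => by rw [card_kncDigraphs_filter_superset hk hB]
    _ = ∑ b ∈ range (n / 2 + 1), ∑ B ∈ oneArcMatchings n with #B = b,
          (-1) ^ b * (#(kncDigraphs k (n - 2 * b)) : ℤ) :=
        (sum_fiberwise_of_maps_to' hcard fun b =>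
          (-1) ^ b * (#(kncDigraphs k (n - 2 * b)) : ℤ)).symm
    _ = _ := by
        refine sum_congr rfl fun b _ => ?_
        rw [sum_const, card_oneArcMatchings_filter_card, ← sum_fNC, nsmul_eq_mul]
        push_cast
        ring
end

section
/- For every integer n ≥ 0, the Catalan numbers satisfy C_{n+2}·C_n − C_{n+1}² = ( 12(2n+1) / ( (n+3)(n+1)²(n+2)² ) ) · binom(2n,n)². -/
/-! Both sides are rational multiples of `C(2n,n)²`: the ratio `C_{m+1}/C_m = 2(2m+1)/(m+2)`
expresses `C_{n+1}` and `C_{n+2}` through `C_n = C(2n,n)/(n+1)`, and the identity becomes one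
between rational functions of `n`. -/

theorem succ_succ_mul_catalan_succ (n : ℕ) :
    (n + 2) * catalan (n + 1) = 2 * (2 * n + 1) * catalan n := by
  refine Nat.eq_of_mul_eq_mul_left n.succ_pos ?_
  calc (n + 1) * ((n + 2) * catalan (n + 1))
      = (n + 1) * Nat.centralBinom (n + 1) := by rw [← succ_mul_catalan_eq_centralBinom]
    _ = 2 * (2 * n + 1) * ((n + 1) * catalan n) := by
      rw [Nat.succ_mul_centralBinom_succ, succ_mul_catalan_eq_centralBinom]
    _ = (n + 1) * (2 * (2 * n + 1) * catalan n) := by ring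

theorem cast_catalan_eq_centralBinom_div {K : Type*} [Field K] [CharZero K] (n : ℕ) :
    (catalan n : K) = Nat.centralBinom n / (n + 1) := by
  rw [eq_div_iff (Nat.cast_add_one_ne_zero n), mul_comm, ← succ_mul_catalan_eq_centralBinom]
  push_cast
  ring

theorem cast_catalan_succ {K : Type*} [Field K] [CharZero K] (n : ℕ) :
    (catalan (n + 1) : K) = 2 * (2 * n + 1) / (n + 2) * catalan n := by
  have hn : (n : K) + 2 ≠ 0 := by exact_mod_cast (n + 1).succ_ne_zero
  rw [div_mul_eq_mul_div, eq_div_iff hn, mul_comm]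
  exact_mod_cast succ_succ_mul_catalan_succ n

/-- `C_{n+2}·C_n − C_{n+1}² = (12(2n+1)/((n+3)(n+1)²(n+2)²)) · C(2n,n)²`. -/
theorem stmt15 (n : ℕ) :
    (catalan (n + 2) : ℚ) * (catalan n : ℚ) - (catalan (n + 1) : ℚ) ^ 2 =
      (12 * (2 * (n : ℚ) + 1)) /
          (((n : ℚ) + 3) * ((n : ℚ) + 1) ^ 2 * ((n : ℚ) + 2) ^ 2) *
        (Nat.choose (2 * n) n : ℚ) ^ 2 := by
  rw [cast_catalan_succ (n + 1), cast_catalan_succ n, cast_catalan_eq_centralBinom_div,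
    Nat.centralBinom]
  push_cast
  field_simp
  ring
end

section
/- Define ρ₃ : ℝ → ℝ by ρ₃(s) = ( 1 + 4e^{s/2} − √(12e^{s} + 8e^{s/2} + 1) ) / (2e^{s}). Then ρ₃ is (twice) differentiable in a neighborhood of 0 and ρ₃(0) = (5−√21)/2, ρ₃'(0) = −3/2 + (13/42)√21, and ρ₃''(0) = 1 − (94/441)√21. Consequently −ρ₃'(0)/ρ₃(0) = −(−3/2 + (13/42)√21)/((5−√21)/2) ≈ 0.39089 and (ρ₃'(0)/ρ₃(0))² − ρ₃''(0)/ρ₃(0) ≈ 0.041565. -/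
/-!
`ρ₃(s)` is a root of `e^s z² - (1 + 4e^{s/2}) z + 1 = 0`. Differentiating this identity once and
twice at `s = 0` gives linear equations for `ρ₃'(0)` and `ρ₃''(0)` whose leading coefficient
`2ρ₃(0) - 5 = -√21` is nonzero, so both values follow from `ρ₃(0) = (5 - √21)/2` by arithmetic in
`ℚ(√21)`. The two constants simplify to `(21 - √21)/42` and `4√21/441`.
-/

open Real

noncomputable def rho3 (s : ℝ) : ℝ :=
  (1 + 4 * exp (s / 2) - √(12 * exp s + 8 * exp (s / 2) + 1)) / (2 * exp s)

theorem HasDerivAt.eq_zero_of_forall_eq_zero {𝕜 F : Type*} [NontriviallyNormedField 𝕜]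
    [NormedAddCommGroup F] [NormedSpace 𝕜 F] {f : 𝕜 → F} {f' : F} {x : 𝕜}
    (hf : HasDerivAt f f' x) (h : ∀ y, f y = 0) : f' = 0 :=
  hf.unique (by simpa [funext h] using hasDerivAt_const x (0 : F))

theorem contDiff_rho3 : ContDiff ℝ 2 rho3 := by
  have hsqrt : ContDiff ℝ 2 fun s => √(12 * exp s + 8 * exp (s / 2) + 1) :=
    ContDiff.sqrt (by fun_prop) fun s => by positivity
  exact ContDiff.div (by fun_prop) (by fun_prop) fun s => by positivity

theorem differentiable_rho3 : Differentiable ℝ rho3 :=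
  contDiff_rho3.differentiable two_ne_zero

theorem differentiable_deriv_rho3 : Differentiable ℝ (deriv rho3) :=
  ((contDiff_succ_iff_deriv (n := 1)).mp contDiff_rho3).2.2.differentiable one_ne_zero

theorem rho3_quadratic (s : ℝ) :
    exp s * rho3 s ^ 2 - (1 + 4 * exp (s / 2)) * rho3 s + 1 = 0 := by
  have hw := sq_sqrt (by positivity : (0 : ℝ) ≤ 12 * exp s + 8 * exp (s / 2) + 1)
  have he : exp s = exp (s / 2) ^ 2 := by rw [← exp_nat_mul]; ring_nf
  unfold rho3
  generalize √(12 * exp s + 8 * exp (s / 2) + 1) = w at hw ⊢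
  rw [he] at hw ⊢
  field_simp
  linear_combination hw

theorem hasDerivAt_one_add_four_exp_half (s : ℝ) :
    HasDerivAt (fun s => 1 + 4 * exp (s / 2)) (2 * exp (s / 2)) s :=
  ((((hasDerivAt_id' s).div_const 2).exp.const_mul 4).const_add 1).congr_deriv (by ring)

theorem hasDerivAt_two_exp_half (s : ℝ) :
    HasDerivAt (fun s => 2 * exp (s / 2)) (exp (s / 2)) s :=
  (((hasDerivAt_id' s).div_const 2).exp.const_mul 2).congr_deriv (by ring)

theorem rho3_first_order (s : ℝ) :
    exp s * rho3 s ^ 2 + 2 * exp s * rho3 s * deriv rho3 s - 2 * exp (s / 2) * rho3 s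
      - (1 + 4 * exp (s / 2)) * deriv rho3 s = 0 := by
  have hρ := (differentiable_rho3 s).hasDerivAt
  have h := ((((hasDerivAt_exp s).mul (hρ.pow 2)).sub
    ((hasDerivAt_one_add_four_exp_half s).mul hρ)).add_const 1).eq_zero_of_forall_eq_zero
    rho3_quadratic
  simp only [Pi.pow_apply] at h
  linear_combination h

theorem rho3_second_order (s : ℝ) :
    exp s * rho3 s ^ 2 + 4 * exp s * rho3 s * deriv rho3 s + 2 * exp s * deriv rho3 s ^ 2
      + 2 * exp s * rho3 s * deriv (deriv rho3) s - exp (s / 2) * rho3 s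
      - 4 * exp (s / 2) * deriv rho3 s - (1 + 4 * exp (s / 2)) * deriv (deriv rho3) s = 0 := by
  have hρ := (differentiable_rho3 s).hasDerivAt
  have hρ' := (differentiable_deriv_rho3 s).hasDerivAt
  have hexp := hasDerivAt_exp s
  have h := (((((hexp.mul (hρ.pow 2)).add ((hexp.const_mul 2).mul hρ |>.mul hρ')).sub
    ((hasDerivAt_two_exp_half s).mul hρ)).sub
    ((hasDerivAt_one_add_four_exp_half s).mul hρ'))).eq_zero_of_forall_eq_zero
    rho3_first_order
  simp only [Pi.pow_apply, Pi.mul_apply] at h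
  linear_combination h

theorem sq_sqrt_21 : √21 ^ 2 = 21 :=
  sq_sqrt (by norm_num)

theorem rho3_zero : rho3 0 = (5 - √21) / 2 := by
  norm_num [rho3]

theorem deriv_rho3_zero : deriv rho3 0 = -3 / 2 + 13 / 42 * √21 := by
  have h := rho3_first_order 0
  have ht0 : √21 ≠ 0 := by positivity
  simp only [rho3_zero, exp_zero, zero_div] at h
  refine mul_left_cancel₀ ht0 ?_
  linear_combination -h - 5 / 84 * sq_sqrt_21

theorem deriv_deriv_rho3_zero : deriv (deriv rho3) 0 = 1 - 94 / 441 * √21 := by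
  have h := rho3_second_order 0
  have ht0 : √21 ≠ 0 := by positivity
  simp only [rho3_zero, deriv_rho3_zero, exp_zero, zero_div] at h
  refine mul_left_cancel₀ ht0 ?_
  linear_combination -h + 1 / 28 * sq_sqrt_21

theorem sqrt_21_mem_Ioo : √21 ∈ Set.Ioo 4.58 4.59 :=
  ⟨(lt_sqrt (by norm_num)).mpr (by norm_num), (sqrt_lt' (by norm_num)).mpr (by norm_num)⟩

theorem deriv_rho3_div_rho3_zero : deriv rho3 0 / rho3 0 = (√21 - 21) / 42 := by
  rw [deriv_rho3_zero, rho3_zero, div_eq_iff (by linarith [sqrt_21_mem_Ioo.2])]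
  linear_combination 1 / 84 * sq_sqrt_21

theorem deriv_deriv_rho3_div_rho3_zero :
    deriv (deriv rho3) 0 / rho3 0 = 11 / 42 - 29 / 882 * √21 := by
  rw [deriv_deriv_rho3_zero, rho3_zero, div_eq_iff (by linarith [sqrt_21_mem_Ioo.2])]
  linear_combination -29 / 1764 * sq_sqrt_21

theorem sq_deriv_div_sub_deriv_deriv_div_rho3_zero :
    (deriv rho3 0 / rho3 0) ^ 2 - deriv (deriv rho3) 0 / rho3 0 = 4 / 441 * √21 := by
  rw [deriv_rho3_div_rho3_zero, deriv_deriv_rho3_div_rho3_zero]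
  linear_combination 1 / 1764 * sq_sqrt_21

/-- The dominant singularity `ρ₃(s) = (1 + 4e^{s/2} − √(12e^s + 8e^{s/2} + 1))/(2e^s)`
is twice differentiable near `0` with `ρ₃(0) = (5−√21)/2`,
`ρ₃'(0) = −3/2 + (13/42)√21`, `ρ₃''(0) = 1 − (94/441)√21`; consequently
`−ρ₃'(0)/ρ₃(0) ≈ 0.39089` and `(ρ₃'(0)/ρ₃(0))² − ρ₃''(0)/ρ₃(0) ≈ 0.041565`. -/
theorem stmt16 (ρ : ℝ → ℝ)
    (hρ : ∀ s : ℝ, ρ s = (1 + 4 * Real.exp (s / 2) -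
      Real.sqrt (12 * Real.exp s + 8 * Real.exp (s / 2) + 1)) / (2 * Real.exp s)) :
    (∃ ε > (0 : ℝ), ∀ s ∈ Metric.ball (0 : ℝ) ε,
        DifferentiableAt ℝ ρ s ∧ DifferentiableAt ℝ (deriv ρ) s) ∧
    ρ 0 = (5 - Real.sqrt 21) / 2 ∧
    deriv ρ 0 = -3 / 2 + (13 / 42) * Real.sqrt 21 ∧
    deriv (deriv ρ) 0 = 1 - (94 / 441) * Real.sqrt 21 ∧
    |(-(deriv ρ 0) / ρ 0) - 0.39089| < 0.001 ∧
    |((deriv ρ 0 / ρ 0) ^ 2 - deriv (deriv ρ) 0 / ρ 0) - 0.041565| < 0.001 := by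
  obtain rfl : ρ = rho3 := funext hρ
  obtain ⟨hlo, hhi⟩ := sqrt_21_mem_Ioo
  refine ⟨⟨1, one_pos, fun s _ => ⟨differentiable_rho3 s, differentiable_deriv_rho3 s⟩⟩,
    rho3_zero, deriv_rho3_zero, deriv_deriv_rho3_zero, ?_, ?_⟩
  · rw [neg_div, deriv_rho3_div_rho3_zero, abs_lt]
    constructor <;> linarith
  · rw [sq_deriv_div_sub_deriv_deriv_div_rho3_zero, abs_lt]
    constructor <;> linarith
end
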